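/- arXiv:2312.01813 — 2 statements merged into one kernel-verified Lean document; each statement's English description precedes it below -/
import Mathlib

section
/- Distortion premium representation via marginal indemnities: for every I ∈ 𝓘 with marginal indemnification q (so I(x) = ∫_0^x q(t) dt, 0 ≤ q ≤ 1) and every increasing function h : [0,1] → ℝ with h(0) = 0, one has ∫_0^∞ h(S_{I(X)}(z)) dz = ∫_0^M h(S_X(x))·q(x) dx. In particular, for any increasing distortion h with h(0)=0 and h(1)=1, the distortion premium Π_h(I(X)) := ∫_0^∞ h(S_{I(X)}(z)) dz equals ∫_0^M h(S_X(x))·q(x) dx. -/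
/-!
On the event `{X < M}`, which is almost sure because `S` is left-continuous at a finite `M`,
the indemnity `I(X)` equals `J(X)`, where `J` is the primitive of `q`. For `p > 0`, continuity
and strict monotonicity of `S` give a threshold `c` with `{S > p} = [0, c)`, and then
`{z > 0 | P(J(X) > z) > p} = (0, J c)`. Its length `J c` is also the `q(x) dx`-mass of
`[0, c)`, so the survival function of `I(X)` under Lebesgue measure on `(0, ∞)` and `S` under
`q(x) dx` on `[0, M)` have the same distribution away from `0`, where `h` vanishes.
-/

open MeasureTheory Set Filter ENNReal Topology

theorem map_restrict_Ioi_zero_eq_of_measure_lt_eq {α β : Type*} [MeasurableSpace α]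
    [MeasurableSpace β] {μ : Measure α} {ν : Measure β} {f : α → ℝ} {g : β → ℝ}
    (hf : Measurable f) (hg : Measurable g) (hfin : ∀ p > 0, μ {a | p < f a} ≠ ∞)
    (hfg : ∀ p > 0, μ {a | p < f a} = ν {b | p < g b}) :
    (μ.map f).restrict (Ioi 0) = (ν.map g).restrict (Ioi 0) := by
  have hIoi : Ioi (0 : ℝ) = ⋃ n : ℕ, Ioi (1 / ((n : ℝ) + 1)) := by
    ext x
    simp only [mem_Ioi, mem_iUnion]
    exact ⟨fun hx => exists_nat_one_div_lt hx, fun ⟨n, hn⟩ => lt_trans Nat.one_div_pos_of_nat hn⟩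
  have hmap : ∀ p > 0, μ.map f (Ioi p) = ν.map g (Ioi p) := fun p hp => by
    rw [Measure.map_apply hf measurableSet_Ioi, Measure.map_apply hg measurableSet_Ioi]
    exact hfg p hp
  -- the measures may be infinite near `0`, but they are finite on each `Ioi (1 / (n + 1))`
  rw [hIoi, Measure.restrict_iUnion_congr]
  intro n
  have hε : (0 : ℝ) < 1 / ((n : ℝ) + 1) := Nat.one_div_pos_of_nat
  have : IsFiniteMeasure ((μ.map f).restrict (Ioi (1 / ((n : ℝ) + 1)))) := by
    refine isFiniteMeasure_restrict.2 ?_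
    rw [Measure.map_apply hf measurableSet_Ioi]
    exact hfin _ hε
  refine ext_of_generate_finite _ (BorelSpace.measurable_eq.trans (borel_eq_generateFrom_Ioi ℝ))
    isPiSystem_Ioi ?_ ?_
  · rintro _ ⟨a, rfl⟩
    rw [Measure.restrict_apply measurableSet_Ioi, Measure.restrict_apply measurableSet_Ioi,
      Ioi_inter_Ioi]
    exact hmap _ (lt_max_of_lt_right hε)
  · rw [Measure.restrict_apply_univ, Measure.restrict_apply_univ]
    exact hmap _ hε

theorem integral_comp_eq_of_measure_lt_eq {α β : Type*} [MeasurableSpace α]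
    [MeasurableSpace β] {μ : Measure α} {ν : Measure β} {f : α → ℝ} {g : β → ℝ}
    (hf : Measurable f) (hg : Measurable g) (hfin : ∀ p > 0, μ {a | p < f a} ≠ ∞)
    (hfg : ∀ p > 0, μ {a | p < f a} = ν {b | p < g b}) {φ : ℝ → ℝ}
    (hφ : Measurable φ) (hφ0 : ∀ s ≤ 0, φ s = 0) :
    ∫ a, φ (f a) ∂μ = ∫ b, φ (g b) ∂ν := by
  have hsupp : ∀ s ∉ Ioi (0 : ℝ), φ s = 0 := fun s hs => hφ0 s (not_lt.1 hs)
  rw [← integral_map hf.aemeasurable hφ.aestronglyMeasurable,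
    ← integral_map hg.aemeasurable hφ.aestronglyMeasurable,
    ← setIntegral_eq_integral_of_forall_compl_eq_zero (μ := μ.map f) hsupp,
    ← setIntegral_eq_integral_of_forall_compl_eq_zero (μ := ν.map g) hsupp,
    map_restrict_Ioi_zero_eq_of_measure_lt_eq hf hg hfin hfg]

theorem integral_comp_eq_of_measure_lt_eq_of_monotoneOn {α β : Type*} [MeasurableSpace α]
    [MeasurableSpace β] {μ : Measure α} {ν : Measure β} {f : α → ℝ} {g : β → ℝ}
    (hf : Measurable f) (hg : Measurable g) (hf01 : ∀ a, f a ∈ Icc 0 1)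
    (hg01 : ∀ b, g b ∈ Icc 0 1) (hfin : ∀ p > 0, μ {a | p < f a} ≠ ∞)
    (hfg : ∀ p > 0, μ {a | p < f a} = ν {b | p < g b}) {h : ℝ → ℝ}
    (hh : MonotoneOn h (Icc 0 1)) (hh0 : h 0 = 0) :
    ∫ a, h (f a) ∂μ = ∫ b, h (g b) ∂ν := by
  set φ : ℝ → ℝ := IccExtend zero_le_one fun s => h s
  have hφh : ∀ s ∈ Icc (0 : ℝ) 1, φ s = h s := fun s hs => IccExtend_of_mem _ _ hs
  have hφ : Monotone φ := Monotone.IccExtend _ fun a b hab => hh a.2 b.2 hab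
  have hφ0 : ∀ s ≤ 0, φ s = 0 := fun s hs => (IccExtend_of_le_left _ _ hs).trans hh0
  simp only [← hφh _ (hf01 _), ← hφh _ (hg01 _)]
  exact integral_comp_eq_of_measure_lt_eq hf hg hfin hfg hφ.measurable hφ0

noncomputable def survival {Ω : Type*} [MeasurableSpace Ω] (μ : Measure Ω) (Y : Ω → ℝ)
    (x : ℝ) : ℝ :=
  μ.real {ω | x < Y ω}

section Survival

variable {Ω : Type*} [MeasurableSpace Ω] {μ : Measure Ω} {Y Z : Ω → ℝ}

theorem survival_le_survival [IsFiniteMeasure μ] {x y : ℝ}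
    (h : {ω | x < Y ω} ⊆ {ω | y < Z ω}) : survival μ Y x ≤ survival μ Z y :=
  measureReal_mono h

theorem survival_antitone [IsFiniteMeasure μ] : Antitone (survival μ Y) :=
  fun _ _ hxy => survival_le_survival fun _ hω => lt_of_le_of_lt hxy hω

theorem survival_mem_Icc [IsProbabilityMeasure μ] (x : ℝ) : survival μ Y x ∈ Icc 0 1 :=
  ⟨measureReal_nonneg, measureReal_le_one⟩

theorem survival_congr_ae (h : Y =ᵐ[μ] Z) : survival μ Y = survival μ Z := by
  funext x
  refine measureReal_congr ?_
  filter_upwards [h] with ω hω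
  change (x < Y ω) = (x < Z ω)
  rw [hω]

theorem tendsto_survival_atTop [IsFiniteMeasure μ] (hY : Measurable Y) :
    Tendsto (survival μ Y) atTop (𝓝 0) := by
  have hlim := tendsto_measure_iInter_atTop (μ := μ) (s := fun x : ℝ => {ω | x < Y ω})
    (fun x => (hY measurableSet_Ioi).nullMeasurableSet)
    (fun x y hxy ω hω => lt_of_le_of_lt hxy hω) ⟨0, measure_ne_top μ _⟩
  have hempty : ⋂ x : ℝ, {ω | x < Y ω} = ∅ :=
    eq_empty_of_forall_notMem fun ω hω => lt_irrefl (Y ω) (mem_iInter.1 hω (Y ω))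
  rw [hempty, measure_empty] at hlim
  exact (ENNReal.tendsto_toReal zero_ne_top).comp hlim

theorem measure_eq_zero_of_continuousWithinAt_survival [IsFiniteMeasure μ] (hY : Measurable Y)
    {m : ℝ} (hS : ContinuousWithinAt (survival μ Y) (Iio m) m) : μ {ω | Y ω = m} = 0 := by
  have hgap : ∀ x < m, μ.real {ω | Y ω = m} ≤ survival μ Y x - survival μ Y m := fun x hx => by
    have hsub : {ω | m < Y ω} ⊆ {ω | x < Y ω} := fun ω hω => lt_trans hx hω
    rw [survival, survival, ← measureReal_sdiff hsub (hY measurableSet_Ioi)]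
    exact measureReal_mono fun ω (hω : Y ω = m) =>
      ⟨show x < Y ω by rw [hω]; exact hx, hω.le.not_gt⟩
  have hlim : Tendsto (fun x => survival μ Y x - survival μ Y m) (𝓝[<] m) (𝓝 0) := by
    simpa using hS.tendsto.sub_const (survival μ Y m)
  have hle : μ.real {ω | Y ω = m} ≤ 0 :=
    ge_of_tendsto hlim (eventually_nhdsWithin_of_forall hgap)
  exact (measureReal_eq_zero_iff (measure_ne_top μ _)).1 (le_antisymm hle measureReal_nonneg)

end Survival

section Primitive

variable {q : ℝ → ℝ} (hq : ∀ t, 0 ≤ q t) (hqi : ∀ a b, IntervalIntegrable q volume a b)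
include hq hqi

theorem monotone_primitive_of_nonneg : Monotone fun x => ∫ t in (0 : ℝ)..x, q t :=
  fun a b hab => by
    rw [← sub_nonneg, intervalIntegral.integral_interval_sub_left (hqi 0 b) (hqi 0 a)]
    exact intervalIntegral.integral_nonneg hab fun t _ => hq t

theorem lintegral_Ico_eq_ofReal_primitive {c : ℝ} (hc : 0 ≤ c) :
    ∫⁻ t in Ico 0 c, ENNReal.ofReal (q t) = ENNReal.ofReal (∫ t in (0 : ℝ)..c, q t) := by
  rw [setLIntegral_congr Ico_ae_eq_Ioc, intervalIntegral.integral_of_le hc,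
    ofReal_integral_eq_lintegral_ofReal (hqi 0 c).1 (Eventually.of_forall hq)]

end Primitive

theorem StrictAntiOn.exists_threshold {S : ℝ → ℝ} {s : Set ℝ} (hS : StrictAntiOn S s)
    {a b p : ℝ} (hab : a ≤ b) (hsub : Icc a b ⊆ s) (hSc : ContinuousOn S (Icc a b))
    (hbp : S b ≤ p) : ∃ c ∈ Icc a b, ∀ x ∈ s, a ≤ x → (p < S x ↔ x < c) := by
  have ha : a ∈ s := hsub (left_mem_Icc.2 hab)
  by_cases hap : S a ≤ p
  · refine ⟨a, left_mem_Icc.2 hab, fun x hx hax => iff_of_false ?_ hax.not_gt⟩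
    exact (hS.antitoneOn ha hx hax).trans hap |>.not_gt
  · obtain ⟨c, hc, rfl⟩ := intermediate_value_Icc' hab hSc ⟨hbp, (not_le.1 hap).le⟩
    exact ⟨c, hc, fun x hx _ => hS.lt_iff_gt (hsub hc) hx⟩

section LevelSets

variable {Ω : Type*} [MeasurableSpace Ω] {μ : Measure Ω} [IsFiniteMeasure μ] {X : Ω → ℝ}

theorem setOf_lt_survival_comp_inter_Ioi {J : ℝ → ℝ} (hJ : Monotone J) (hJc : Continuous J)
    (hJ0 : J 0 = 0) {p c : ℝ} (hc : 0 ≤ c)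
    (hthr : ∀ x ∈ Icc 0 c, p < survival μ X x ↔ x < c) :
    {z | p < survival μ (J ∘ X) z} ∩ Ioi 0 = Ioo 0 (J c) := by
  ext z
  simp only [mem_inter_iff, mem_ofPred_eq, mem_Ioi, mem_Ioo]
  rw [and_comm, and_congr_right_iff]
  intro hz
  constructor
  · intro hpz
    by_contra! hcz
    have hle : survival μ (J ∘ X) z ≤ survival μ X c :=
      survival_le_survival fun ω hω => lt_of_not_ge fun hXc => (hJ hXc).trans hcz |>.not_gt hω
    exact ((hthr c (right_mem_Icc.2 hc)).1 (hpz.trans_le hle)).false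
  · intro hzc
    obtain ⟨x, hx, hJx⟩ := intermediate_value_Icc hc hJc.continuousOn
      (show (z + J c) / 2 ∈ Icc (J 0) (J c) by constructor <;> linarith)
    have hxc : x < c := lt_of_le_of_ne hx.2 fun h => by subst h; linarith
    refine ((hthr x hx).2 hxc).trans_le (survival_le_survival fun ω hω => ?_)
    have := hJ (le_of_lt hω)
    simp only [mem_ofPred_eq, Function.comp_apply] at this ⊢
    linarith

theorem setOf_lt_inter_eq_Ico {S : ℝ → ℝ} {M : ℝ≥0∞} {p c : ℝ}
    (hcM : ENNReal.ofReal c ≤ M)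
    (hthr : ∀ x ∈ {x : ℝ | 0 ≤ x ∧ ENNReal.ofReal x ≤ M}, 0 ≤ x → (p < S x ↔ x < c)) :
    {x | p < S x} ∩ {x : ℝ | 0 ≤ x ∧ ENNReal.ofReal x < M} = Ico 0 c := by
  ext x
  constructor
  · rintro ⟨hpx, hx, hxM⟩
    exact ⟨hx, (hthr x ⟨hx, hxM.le⟩ hx).1 hpx⟩
  · rintro ⟨hx, hxc⟩
    have hxM : ENNReal.ofReal x < M :=
      ((ENNReal.ofReal_lt_ofReal_iff_of_nonneg hx).2 hxc).trans_le hcM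
    exact ⟨(hthr x ⟨hx, hxM.le⟩ hx).2 hxc, hx, hxM⟩

variable {M : ℝ≥0∞}

theorem exists_survival_le (hX : Measurable X) (hXM : ∀ᵐ ω ∂μ, ENNReal.ofReal (X ω) ≤ M)
    {p : ℝ} (hp : 0 < p) :
    ∃ b ∈ {x : ℝ | 0 ≤ x ∧ ENNReal.ofReal x ≤ M}, survival μ X b ≤ p := by
  rcases eq_or_ne M ⊤ with rfl | hM
  · obtain ⟨b, hbp, hb⟩ := (((tendsto_survival_atTop (μ := μ) hX).eventually
      (ge_mem_nhds hp)).and (eventually_ge_atTop 0)).exists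
    exact ⟨b, ⟨hb, le_top⟩, hbp⟩
  · refine ⟨M.toReal, ⟨ENNReal.toReal_nonneg, ENNReal.ofReal_toReal_le⟩, ?_⟩
    have hnull : μ {ω | M.toReal < X ω} = 0 := measure_eq_zero_iff_ae_notMem.2 <|
      hXM.mono fun ω hω => not_lt.2 ((ENNReal.ofReal_le_iff_le_toReal hM).1 hω)
    simp [survival, measureReal_def, hnull, hp.le]

theorem ae_ofReal_lt_of_continuousOn_survival (hX : Measurable X) (hM : 0 < M)
    (hXM : ∀ᵐ ω ∂μ, ENNReal.ofReal (X ω) ≤ M)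
    (hS : ContinuousOn (survival μ X) {x : ℝ | 0 ≤ x ∧ ENNReal.ofReal x ≤ M}) :
    ∀ᵐ ω ∂μ, ENNReal.ofReal (X ω) < M := by
  rcases eq_or_ne M ⊤ with rfl | hMtop
  · exact Eventually.of_forall fun ω => ENNReal.ofReal_lt_top
  have hm : 0 < M.toReal := ENNReal.toReal_pos hM.ne' hMtop
  have hcont : ContinuousWithinAt (survival μ X) (Iio M.toReal) M.toReal :=
    (hS _ ⟨hm.le, ENNReal.ofReal_toReal_le⟩).mono_of_mem_nhdsWithin <|
      mem_of_superset (Ioo_mem_nhdsLT hm) fun x hx =>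
        ⟨hx.1.le, (ENNReal.ofReal_le_iff_le_toReal hMtop).2 hx.2.le⟩
  filter_upwards [hXM, measure_eq_zero_iff_ae_notMem.1
    (measure_eq_zero_of_continuousWithinAt_survival hX hcont)] with ω hle hne
  refine lt_of_le_of_ne hle fun heq => hne ?_
  have hpos : 0 < X ω := ENNReal.ofReal_pos.1 (heq ▸ hM)
  show X ω = M.toReal
  rw [← heq, ENNReal.toReal_ofReal hpos.le]

theorem exists_measure_lt_survival_eq (hX : Measurable X)
    (hXM : ∀ᵐ ω ∂μ, ENNReal.ofReal (X ω) ≤ M)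
    (hScont : ContinuousOn (survival μ X) {x : ℝ | 0 ≤ x ∧ ENNReal.ofReal x ≤ M})
    (hSanti : StrictAntiOn (survival μ X) {x : ℝ | 0 ≤ x ∧ ENNReal.ofReal x ≤ M})
    {J q : ℝ → ℝ} (hJ : Monotone J) (hJc : Continuous J) (hJ0 : J 0 = 0)
    (hJq : ∀ c, 0 ≤ c → ∫⁻ t in Ico 0 c, ENNReal.ofReal (q t) = ENNReal.ofReal (J c))
    {p : ℝ} (hp : 0 < p) :
    ∃ c, volume.restrict (Ioi 0) {z | p < survival μ (J ∘ X) z} = ENNReal.ofReal (J c) ∧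
      (volume.restrict {x : ℝ | 0 ≤ x ∧ ENNReal.ofReal x < M}).withDensity
        (fun x => ENNReal.ofReal (q x)) {x | p < survival μ X x} = ENNReal.ofReal (J c) := by
  obtain ⟨b, hb, hbp⟩ := exists_survival_le hX hXM hp
  have hIcc : ∀ c ∈ Icc 0 b, ENNReal.ofReal c ≤ M := fun c hc =>
    (ENNReal.ofReal_le_ofReal hc.2).trans hb.2
  obtain ⟨c, hc, hthr⟩ := hSanti.exists_threshold hb.1 (fun x hx => ⟨hx.1, hIcc x hx⟩)
    (hScont.mono fun x hx => ⟨hx.1, hIcc x hx⟩) hbp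
  have hcM := hIcc c hc
  refine ⟨c, ?_, ?_⟩
  · rw [Measure.restrict_apply' measurableSet_Ioi, setOf_lt_survival_comp_inter_Ioi hJ hJc hJ0
      hc.1 fun x hx => hthr x ⟨hx.1, (ENNReal.ofReal_le_ofReal hx.2).trans hcM⟩ hx.1,
      Real.volume_Ioo, sub_zero]
  · rw [withDensity_apply _ (measurableSet_lt measurable_const survival_antitone.measurable),
      Measure.restrict_restrict (measurableSet_lt measurable_const survival_antitone.measurable),
      setOf_lt_inter_eq_Ico hcM hthr, hJq c hc.1]

end LevelSets

theorem distortion_premium_marginal_representation_general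
    {Ω : Type*} [MeasurableSpace Ω] (μ : Measure Ω) [IsProbabilityMeasure μ]
    -- the nonnegative integrable loss X
    (X : Ω → ℝ) (hXmeas : Measurable X) (hXnonneg : ∀ ω, 0 ≤ X ω)
    -- the essential supremum M ∈ (0,∞] of X
    (M : ℝ≥0∞) (hM : 0 < M)
    (hXleM : ∀ᵐ ω ∂μ, ENNReal.ofReal (X ω) ≤ M)
    -- the survival function of X, continuous and strictly decreasing on [0,M]
    (S : ℝ → ℝ) (hS : S = fun x => (μ {ω | x < X ω}).toReal)
    (hScont : ContinuousOn S {x : ℝ | 0 ≤ x ∧ ENNReal.ofReal x ≤ M})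
    (hSanti : StrictAntiOn S {x : ℝ | 0 ≤ x ∧ ENNReal.ofReal x ≤ M})
    :
    ∀ (I : ℝ → ℝ), I 0 = 0 →
      (∀ ⦃x y : ℝ⦄, 0 ≤ y → y ≤ x → ENNReal.ofReal x < M →
        0 ≤ I x - I y ∧ I x - I y ≤ x - y) →
      ∀ (q : ℝ → ℝ), Measurable q → (∀ t : ℝ, 0 ≤ q t ∧ q t ≤ 1) →
      (∀ x : ℝ, 0 ≤ x → ENNReal.ofReal x < M → I x = ∫ t in (0:ℝ)..x, q t) →
      ∀ (h : ℝ → ℝ), MonotoneOn h (Set.Icc 0 1) → h 0 = 0 →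
      (∫ z in Set.Ioi (0:ℝ), h ((μ {ω | z < I (X ω)}).toReal))
        = ∫ x in {x : ℝ | 0 ≤ x ∧ ENNReal.ofReal x < M}, h (S x) * q x := by
  intro I _ _ q hqmeas hq01 hIq h hmono hh0
  obtain rfl : S = survival μ X := hS
  set J : ℝ → ℝ := fun x => ∫ t in (0 : ℝ)..x, q t
  have hqi : ∀ a b, IntervalIntegrable q volume a b := fun a b =>
    (intervalIntegrable_const (c := (1 : ℝ))).mono_fun hqmeas.aestronglyMeasurable <|
      Eventually.of_forall fun t => by simp [abs_of_nonneg (hq01 t).1, (hq01 t).2]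
  have hIJ : survival μ (I ∘ X) = survival μ (J ∘ X) := survival_congr_ae <| by
    filter_upwards [ae_ofReal_lt_of_continuousOn_survival hXmeas hM hXleM hScont] with ω hω
    exact hIq _ (hXnonneg ω) hω
  have hdist := fun p (hp : 0 < p) => exists_measure_lt_survival_eq hXmeas hXleM hScont hSanti
    (monotone_primitive_of_nonneg (fun t => (hq01 t).1) hqi)
    (intervalIntegral.continuous_primitive hqi 0) intervalIntegral.integral_same
    (fun c hc => lintegral_Ico_eq_ofReal_primitive (fun t => (hq01 t).1) hqi hc) hp
  calc ∫ z in Ioi 0, h ((μ {ω | z < I (X ω)}).toReal)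
      = ∫ z in Ioi 0, h (survival μ (J ∘ X) z) := by rw [← hIJ]; rfl
    _ = ∫ x, h (survival μ X x)
          ∂(volume.restrict {x : ℝ | 0 ≤ x ∧ ENNReal.ofReal x < M}).withDensity
            (fun x => ENNReal.ofReal (q x)) :=
        integral_comp_eq_of_measure_lt_eq_of_monotoneOn survival_antitone.measurable
          survival_antitone.measurable survival_mem_Icc survival_mem_Icc
          (fun p hp => by obtain ⟨c, hT, -⟩ := hdist p hp; exact hT ▸ ENNReal.ofReal_ne_top)
          (fun p hp => by obtain ⟨c, hT, hS⟩ := hdist p hp; exact hT.trans hS.symm) hmono hh0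
    _ = ∫ x in {x : ℝ | 0 ≤ x ∧ ENNReal.ofReal x < M}, h (survival μ X x) * q x := by
        rw [integral_withDensity_eq_integral_toReal_smul hqmeas.ennreal_ofReal
          (Eventually.of_forall fun _ => ENNReal.ofReal_lt_top)]
        refine integral_congr_ae (Eventually.of_forall fun x => ?_)
        simp only [ENNReal.toReal_ofReal (hq01 x).1, smul_eq_mul, mul_comm]

/-- distortion premium representation via marginal indemnities.  For every
`I ∈ 𝓘` with marginal indemnification `q` (so `I(x) = ∫_0^x q(t) dt`, `0 ≤ q ≤ 1`) and
every increasing `h : [0,1] → ℝ` with `h(0) = 0`,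
`∫_0^∞ h(S_{I(X)}(z)) dz = ∫_0^M h(S_X(x))·q(x) dx`. -/
theorem distortion_premium_marginal_representation
    {Ω : Type*} [MeasurableSpace Ω] (μ : Measure Ω) [IsProbabilityMeasure μ]
    -- the probability space is atomless
    (hatomless : ∀ s : Set Ω, MeasurableSet s → 0 < μ s →
      ∃ t, t ⊆ s ∧ MeasurableSet t ∧ 0 < μ t ∧ μ t < μ s)
    -- the nonnegative integrable loss X
    (X : Ω → ℝ) (hXmeas : Measurable X) (hXnonneg : ∀ ω, 0 ≤ X ω)
    (hXint : Integrable X μ)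
    -- the essential supremum M ∈ (0,∞] of X
    (M : ℝ≥0∞) (hM : 0 < M)
    (hXleM : ∀ᵐ ω ∂μ, ENNReal.ofReal (X ω) ≤ M)
    -- the survival function of X, continuous and strictly decreasing on [0,M]
    (S : ℝ → ℝ) (hS : S = fun x => (μ {ω | x < X ω}).toReal)
    (hScont : ContinuousOn S {x : ℝ | 0 ≤ x ∧ ENNReal.ofReal x ≤ M})
    (hSanti : StrictAntiOn S {x : ℝ | 0 ≤ x ∧ ENNReal.ofReal x ≤ M})
    :
    ∀ (I : ℝ → ℝ), I 0 = 0 →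
      (∀ ⦃x y : ℝ⦄, 0 ≤ y → y ≤ x → ENNReal.ofReal x < M →
        0 ≤ I x - I y ∧ I x - I y ≤ x - y) →
      ∀ (q : ℝ → ℝ), Measurable q → (∀ t : ℝ, 0 ≤ q t ∧ q t ≤ 1) →
      (∀ x : ℝ, 0 ≤ x → ENNReal.ofReal x < M → I x = ∫ t in (0:ℝ)..x, q t) →
      ∀ (h : ℝ → ℝ), MonotoneOn h (Set.Icc 0 1) → h 0 = 0 →
      (∫ z in Set.Ioi (0:ℝ), h ((μ {ω | z < I (X ω)}).toReal))
        = ∫ x in {x : ℝ | 0 ≤ x ∧ ENNReal.ofReal x < M}, h (S x) * q x :=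
  distortion_premium_marginal_representation_general μ X hXmeas hXnonneg M hM hXleM S hS hScont
    hSanti
end

section
/- The variance of the retained loss under a deductible is nondecreasing in the deductible: define w₁(d) = ∫_0^d S_X(x) dx and w₂(d) = 2∫_0^d x·S_X(x) dx, so that w₁(d) = E[X ∧ d], w₂(d) = E[(X ∧ d)²] and w(d) := w₂(d) − w₁(d)² = Var(X ∧ d). Then w is differentiable on (0,M) with w'(d) = 2·S_X(d)·(d − w₁(d)) ≥ 0; in particular d ↦ Var(X ∧ d) is nondecreasing on [0,M]. -/
/-!
The layer-cake formula `E[G(X ∧ d)] = ∫₀^d G'(t) P(X > t) dt`, for `G(x) = x` and `G(x) = x²`,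
identifies `w₁(d)` and `w₂(d)` with the first two moments of `X ∧ d`, so `w(d) = Var(X ∧ d)`.
At a continuity point `d` of `S` the fundamental theorem of calculus gives
`w'(d) = 2 d S(d) - 2 w₁(d) S(d) = 2 S(d) (d - w₁(d))`, which is nonnegative because
`w₁(d) = E[X ∧ d] ≤ d`. Since `w` is continuous, it is nondecreasing on `[0, M]`.
-/

open MeasureTheory Set Filter ENNReal NNReal

noncomputable section

section Truncation

variable {α : Type*} {f : α → ℝ} {d t : ℝ}

lemma setOf_lt_min_of_lt (ht : t < d) : {ω | t < min (f ω) d} = {ω | t < f ω} := by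
  ext ω; simp [ht]

lemma setOf_lt_min_of_le (ht : d ≤ t) : {ω | t < min (f ω) d} = ∅ := by
  ext ω; simp [ht]

variable [MeasurableSpace α] {μ : Measure α}

lemma antitone_meas_lt [IsFiniteMeasure μ] (f : α → ℝ) :
    Antitone fun t => μ.real {ω | t < f ω} :=
  fun _ _ hst => measureReal_mono fun _ hω => hst.trans_lt hω

lemma intervalIntegral_meas_lt_le [IsProbabilityMeasure μ] (f : α → ℝ) (hd : 0 ≤ d) :
    ∫ t in 0..d, μ.real {ω | t < f ω} ≤ d :=
  calc ∫ t in 0..d, μ.real {ω | t < f ω} ≤ ∫ t in 0..d, (1 : ℝ) :=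
        intervalIntegral.integral_mono_on hd (antitone_meas_lt f).intervalIntegrable
          intervalIntegrable_const fun _ _ => measureReal_le_one
    _ = d := by simp

theorem integral_comp_min_eq_intervalIntegral_meas_lt_mul [IsFiniteMeasure μ] (hf_nn : ∀ ω, 0 ≤ f ω)
    (hf : Measurable f) (hd : 0 ≤ d) {g : ℝ → ℝ} (hg : Continuous g)
    (hg_nn : ∀ t, 0 ≤ t → 0 ≤ g t) :
    ∫ ω, (∫ t in 0..min (f ω) d, g t) ∂μ = ∫ t in 0..d, g t * μ.real {ω | t < f ω} := by
  have layer_cake := lintegral_comp_eq_lintegral_meas_lt_mul μ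
    (ae_of_all _ fun ω => le_min (hf_nn ω) hd) (hf.min measurable_const).aemeasurable
    (fun t _ => hg.intervalIntegrable 0 t)
    (ae_restrict_of_forall_mem measurableSet_Ioi fun t ht => hg_nn t (le_of_lt ht))
  have tail : ∫⁻ t in Ioi 0, μ {ω | t < min (f ω) d} * ENNReal.ofReal (g t)
      = ∫⁻ t in Ioo 0 d, ENNReal.ofReal (g t * μ.real {ω | t < f ω}) := by
    rw [← Ioc_union_Ioi_eq_Ioi hd, lintegral_union measurableSet_Ioi Ioc_disjoint_Ioi_same,
      ← setLIntegral_congr Ioo_ae_eq_Ioc,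
      setLIntegral_congr_fun measurableSet_Ioi fun t ht => by
        rw [setOf_lt_min_of_le (le_of_lt ht), measure_empty, zero_mul],
      lintegral_zero, add_zero]
    refine setLIntegral_congr_fun measurableSet_Ioo fun t ht => ?_
    rw [setOf_lt_min_of_lt ht.2, ENNReal.ofReal_mul (hg_nn t (le_of_lt ht.1)), ofReal_measureReal,
      mul_comm]
  have lhs_nn : ∀ ω, 0 ≤ ∫ t in 0..min (f ω) d, g t := fun ω =>
    intervalIntegral.integral_nonneg (le_min (hf_nn ω) hd) fun t ht => hg_nn t ht.1
  have lhs_meas : Measurable fun ω => ∫ t in 0..min (f ω) d, g t :=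
    (intervalIntegral.continuous_primitive hg.intervalIntegrable 0).measurable.comp
      (hf.min measurable_const)
  have rhs_nn : ∀ t ∈ Ioo 0 d, 0 ≤ g t * μ.real {ω | t < f ω} := fun t ht =>
    mul_nonneg (hg_nn t (le_of_lt ht.1)) measureReal_nonneg
  have rhs_meas : Measurable fun t => g t * μ.real {ω | t < f ω} :=
    hg.measurable.mul (antitone_meas_lt f).measurable
  rw [intervalIntegral.integral_of_le hd, integral_Ioc_eq_integral_Ioo,
    integral_eq_lintegral_of_nonneg_ae (ae_of_all _ lhs_nn) lhs_meas.aestronglyMeasurable,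
    integral_eq_lintegral_of_nonneg_ae (ae_restrict_of_forall_mem measurableSet_Ioo rhs_nn)
      rhs_meas.aestronglyMeasurable, layer_cake, tail]

theorem integral_min_eq_intervalIntegral_meas_lt [IsFiniteMeasure μ] (hf_nn : ∀ ω, 0 ≤ f ω)
    (hf : Measurable f) (hd : 0 ≤ d) :
    ∫ ω, min (f ω) d ∂μ = ∫ t in 0..d, μ.real {ω | t < f ω} := by
  simpa using integral_comp_min_eq_intervalIntegral_meas_lt_mul (μ := μ) hf_nn hf hd
    continuous_const fun _ _ => zero_le_one

theorem integral_min_sq_eq_intervalIntegral_meas_lt_mul [IsFiniteMeasure μ]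
    (hf_nn : ∀ ω, 0 ≤ f ω) (hf : Measurable f) (hd : 0 ≤ d) :
    ∫ ω, min (f ω) d ^ 2 ∂μ = 2 * ∫ t in 0..d, t * μ.real {ω | t < f ω} := by
  have h := integral_comp_min_eq_intervalIntegral_meas_lt_mul (μ := μ) (g := fun t => 2 * t)
    hf_nn hf hd (continuous_const.mul continuous_id) fun t ht => mul_nonneg zero_le_two ht
  have primitive : ∀ y : ℝ, ∫ t in 0..y, 2 * t = y ^ 2 := fun y => by
    rw [intervalIntegral.integral_const_mul, integral_id]; ring
  simpa only [primitive, mul_assoc, intervalIntegral.integral_const_mul] using h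

end Truncation

/-- The paper's `w = w₂ - w₁²`, as a function of the survival function `S`. -/
def tailVariance (S : ℝ → ℝ) (d : ℝ) : ℝ :=
  2 * (∫ x in 0..d, x * S x) - (∫ x in 0..d, S x) ^ 2

theorem ProbabilityTheory.variance_min_eq_tailVariance {Ω : Type*} [MeasurableSpace Ω]
    {μ : Measure Ω} [IsProbabilityMeasure μ] {X : Ω → ℝ} (hX_nn : ∀ ω, 0 ≤ X ω)
    (hX : Measurable X) {d : ℝ} (hd : 0 ≤ d) :
    variance (fun ω => min (X ω) d) μ = tailVariance (fun t => μ.real {ω | t < X ω}) d := by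
  have hY : MemLp (fun ω => min (X ω) d) 2 μ :=
    MemLp.of_bound (hX.min measurable_const).aestronglyMeasurable d <| ae_of_all _ fun ω => by
      rw [Real.norm_of_nonneg (le_min (hX_nn ω) hd)]; exact min_le_right _ _
  simp only [variance_eq_sub hY, Pi.pow_apply]
  rw [tailVariance, integral_min_eq_intervalIntegral_meas_lt hX_nn hX hd,
    integral_min_sq_eq_intervalIntegral_meas_lt_mul hX_nn hX hd]

section TailVariance

variable {S : ℝ → ℝ}

lemma MeasureTheory.LocallyIntegrable.intervalIntegrable (hS : LocallyIntegrable S) (a b : ℝ) :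
    IntervalIntegrable S volume a b :=
  (hS.integrableOn_isCompact isCompact_uIcc).intervalIntegrable

theorem continuous_tailVariance (hS : LocallyIntegrable S) : Continuous (tailVariance S) := by
  have hxS : LocallyIntegrable (fun x => x * S x) := hS.continuous_mul continuous_id
  exact (continuous_const.mul (intervalIntegral.continuous_primitive
      hxS.intervalIntegrable 0)).sub
    ((intervalIntegral.continuous_primitive hS.intervalIntegrable 0).pow 2)

theorem hasDerivAt_tailVariance (hS : LocallyIntegrable S) {d : ℝ} (hd : ContinuousAt S d) :
    HasDerivAt (tailVariance S) (2 * S d * (d - ∫ x in 0..d, S x)) d := by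
  have hxS : LocallyIntegrable (fun x => x * S x) := hS.continuous_mul continuous_id
  have h₁ := intervalIntegral.integral_hasDerivAt_right (hS.intervalIntegrable 0 d)
    hS.aestronglyMeasurable.stronglyMeasurableAtFilter hd
  have h₂ := intervalIntegral.integral_hasDerivAt_right (hxS.intervalIntegrable 0 d)
    hxS.aestronglyMeasurable.stronglyMeasurableAtFilter (continuousAt_id.mul hd)
  refine ((h₂.const_mul 2).sub (h₁.fun_pow 2)).congr_deriv ?_
  push_cast
  ring

end TailVariance

theorem monotoneOn_of_hasDerivAt_nonneg_of_Ioo_subset {f f' : ℝ → ℝ} {D U : Set ℝ}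
    (hf : Continuous f) (hDU : ∀ a ∈ D, ∀ b ∈ D, Ioo a b ⊆ U)
    (hf' : ∀ x ∈ U, HasDerivAt f (f' x) x ∧ 0 ≤ f' x) : MonotoneOn f D := by
  intro a ha b hb hab
  refine monotoneOn_of_deriv_nonneg (convex_Icc a b) hf.continuousOn ?_ ?_
    (left_mem_Icc.2 hab) (right_mem_Icc.2 hab) hab
  all_goals rw [interior_Icc]
  · exact fun x hx => (hf' x (hDU a ha b hb hx)).1.differentiableAt.differentiableWithinAt
  · exact fun x hx => (hf' x (hDU a ha b hb hx)).1.deriv ▸ (hf' x (hDU a ha b hb hx)).2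


theorem variance_of_capped_loss_monotone_general
    {Ω : Type*} [MeasurableSpace Ω] (μ : Measure Ω) [IsProbabilityMeasure μ]
    -- the nonnegative integrable loss X
    (X : Ω → ℝ) (hXmeas : Measurable X) (hXnonneg : ∀ ω, 0 ≤ X ω)
    -- the essential supremum M ∈ (0,∞] of X
    (M : ℝ≥0∞)
    -- the survival function of X, continuous and strictly decreasing on [0,M]
    (S : ℝ → ℝ) (hS : S = fun x => (μ {ω | x < X ω}).toReal)
    (hScont : ContinuousOn S {x : ℝ | 0 ≤ x ∧ ENNReal.ofReal x ≤ M})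
    -- the auxiliary functions w₁ and w₂
    (w₁ w₂ : ℝ → ℝ)
    (hw₁ : w₁ = fun d => ∫ x in (0:ℝ)..d, S x)
    (hw₂ : w₂ = fun d => 2 * ∫ x in (0:ℝ)..d, x * S x) :
    (∀ d : ℝ, 0 ≤ d → ENNReal.ofReal d ≤ M →
      w₁ d = (∫ ω, min (X ω) d ∂μ) ∧
      w₂ d = (∫ ω, (min (X ω) d) ^ 2 ∂μ) ∧
      w₂ d - (w₁ d) ^ 2 = ProbabilityTheory.variance (fun ω => min (X ω) d) μ) ∧
    (∀ d : ℝ, 0 < d → ENNReal.ofReal d < M →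
      HasDerivAt (fun t => w₂ t - (w₁ t) ^ 2) (2 * S d * (d - w₁ d)) d ∧
      0 ≤ 2 * S d * (d - w₁ d)) ∧
    MonotoneOn (fun d => ProbabilityTheory.variance (fun ω => min (X ω) d) μ)
      {d : ℝ | 0 ≤ d ∧ ENNReal.ofReal d ≤ M} := by
  replace hS : S = fun t => μ.real {ω | t < X ω} := hS
  subst hw₁ hw₂
  have hS_int : LocallyIntegrable S := hS ▸ (antitone_meas_lt X).locallyIntegrable
  have variance_eq : ∀ d : ℝ, 0 ≤ d →
      ProbabilityTheory.variance (fun ω => min (X ω) d) μ = tailVariance S d := fun d hd =>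
    hS ▸ ProbabilityTheory.variance_min_eq_tailVariance hXnonneg hXmeas hd
  have derivative : ∀ d : ℝ, 0 < d → ENNReal.ofReal d < M →
      HasDerivAt (tailVariance S) (2 * S d * (d - ∫ t in 0..d, S t)) d ∧
      0 ≤ 2 * S d * (d - ∫ t in 0..d, S t) := by
    intro d hd hdM
    have domain_mem_nhds : {x : ℝ | 0 ≤ x ∧ ENNReal.ofReal x ≤ M} ∈ nhds d :=
      mem_of_superset ((isOpen_Ioi.inter (isOpen_Iio.preimage ENNReal.continuous_ofReal)).mem_nhds
        ⟨hd, hdM⟩) fun x hx => ⟨le_of_lt hx.1, le_of_lt hx.2⟩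
    have mean_le : ∫ t in 0..d, S t ≤ d := hS ▸ intervalIntegral_meas_lt_le X hd.le
    exact ⟨hasDerivAt_tailVariance hS_int (hScont.continuousAt domain_mem_nhds),
      mul_nonneg (mul_nonneg zero_le_two (hS ▸ measureReal_nonneg)) (sub_nonneg.2 mean_le)⟩
  refine ⟨fun d hd _ => ⟨?_, ?_, (variance_eq d hd).symm⟩, derivative, ?_⟩
  · rw [hS]; exact (integral_min_eq_intervalIntegral_meas_lt hXnonneg hXmeas hd).symm
  · rw [hS]; exact (integral_min_sq_eq_intervalIntegral_meas_lt_mul hXnonneg hXmeas hd).symm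
  refine (monotoneOn_of_hasDerivAt_nonneg_of_Ioo_subset (continuous_tailVariance hS_int)
    (U := {x | 0 < x ∧ ENNReal.ofReal x < M}) ?_ fun x hx => derivative x hx.1 hx.2).congr
    fun d hd => (variance_eq d hd.1).symm
  rintro a ⟨ha, -⟩ b ⟨-, hbM⟩ x ⟨hax, hxb⟩
  exact ⟨ha.trans_lt hax,
    ((ENNReal.ofReal_lt_ofReal_iff (ha.trans_lt (hax.trans hxb))).2 hxb).trans_le hbM⟩

/-- the variance of the retained loss under a deductible is nondecreasing
in the deductible: with `w₁(d) = ∫_0^d S_X = E[X ∧ d]`, `w₂(d) = 2∫_0^d x·S_X(x) dx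
= E[(X ∧ d)²]` and `w = w₂ − w₁² = Var(X ∧ d)`, the function `w` is differentiable on
`(0,M)` with `w'(d) = 2·S_X(d)·(d − w₁(d)) ≥ 0`, and `d ↦ Var(X ∧ d)` is nondecreasing
on `[0,M]`. -/
theorem variance_of_capped_loss_monotone
    {Ω : Type*} [MeasurableSpace Ω] (μ : Measure Ω) [IsProbabilityMeasure μ]
    -- the probability space is atomless
    (hatomless : ∀ s : Set Ω, MeasurableSet s → 0 < μ s →
      ∃ t, t ⊆ s ∧ MeasurableSet t ∧ 0 < μ t ∧ μ t < μ s)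
    -- the nonnegative integrable loss X
    (X : Ω → ℝ) (hXmeas : Measurable X) (hXnonneg : ∀ ω, 0 ≤ X ω)
    (hXint : Integrable X μ)
    -- the essential supremum M ∈ (0,∞] of X
    (M : ℝ≥0∞) (hM : 0 < M)
    (hXleM : ∀ᵐ ω ∂μ, ENNReal.ofReal (X ω) ≤ M)
    -- the survival function of X, continuous and strictly decreasing on [0,M]
    (S : ℝ → ℝ) (hS : S = fun x => (μ {ω | x < X ω}).toReal)
    (hScont : ContinuousOn S {x : ℝ | 0 ≤ x ∧ ENNReal.ofReal x ≤ M})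
    (hSanti : StrictAntiOn S {x : ℝ | 0 ≤ x ∧ ENNReal.ofReal x ≤ M})
    -- X has finite second moment
    (hX2 : Integrable (fun ω => X ω ^ 2) μ)
    -- the auxiliary functions w₁ and w₂
    (w₁ w₂ : ℝ → ℝ)
    (hw₁ : w₁ = fun d => ∫ x in (0:ℝ)..d, S x)
    (hw₂ : w₂ = fun d => 2 * ∫ x in (0:ℝ)..d, x * S x) :
    (∀ d : ℝ, 0 ≤ d → ENNReal.ofReal d ≤ M →
      w₁ d = (∫ ω, min (X ω) d ∂μ) ∧
      w₂ d = (∫ ω, (min (X ω) d) ^ 2 ∂μ) ∧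
      w₂ d - (w₁ d) ^ 2 = ProbabilityTheory.variance (fun ω => min (X ω) d) μ) ∧
    (∀ d : ℝ, 0 < d → ENNReal.ofReal d < M →
      HasDerivAt (fun t => w₂ t - (w₁ t) ^ 2) (2 * S d * (d - w₁ d)) d ∧
      0 ≤ 2 * S d * (d - w₁ d)) ∧
    MonotoneOn (fun d => ProbabilityTheory.variance (fun ω => min (X ω) d) μ)
      {d : ℝ | 0 ≤ d ∧ ENNReal.ofReal d ≤ M} :=
  variance_of_capped_loss_monotone_general μ X hXmeas hXnonneg M S hS hScont w₁ w₂ hw₁ hw₂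

end
end
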